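/- A binary phylogenetic network N is orchard if and only if V_OR(N) = 0, where V_OR(N) is the minimum over all non-temporal labellings of N of the number of reticulations with no incoming horizontal arc. -/

import Mathlib

namespace PhyloNet

/-- A binary phylogenetic network, encoded on vertex set `verts ⊆ ℕ`. -/
structure Network where
  verts : Finset ℕ
  arc : ℕ → ℕ → Bool
  root : ℕ
  root_mem : root ∈ verts
  arc_mem : ∀ u v : ℕ, arc u v = true → u ∈ verts ∧ v ∈ verts
  acyclic : ∀ v : ℕ, ¬ Relation.TransGen (fun a b : ℕ => arc a b = true) v v
  root_indeg : (verts.filter fun u => arc u root = true).card = 0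
  root_outdeg : (verts.filter fun w => arc root w = true).card = 1
  nonroot_deg : ∀ v ∈ verts, v ≠ root →
    ((verts.filter fun u => arc u v = true).card = 1 ∧
      (verts.filter fun w => arc v w = true).card = 2) ∨
    ((verts.filter fun u => arc u v = true).card = 2 ∧
      (verts.filter fun w => arc v w = true).card = 1) ∨
    ((verts.filter fun u => arc u v = true).card = 1 ∧
      (verts.filter fun w => arc v w = true).card = 0)

def inDeg (N : Network) (v : ℕ) : ℕ := (N.verts.filter fun u => N.arc u v = true).card

def outDeg (N : Network) (v : ℕ) : ℕ := (N.verts.filter fun w => N.arc v w = true).card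

def IsLeaf (N : Network) (v : ℕ) : Prop := v ∈ N.verts ∧ inDeg N v = 1 ∧ outDeg N v = 0

def IsRet (N : Network) (v : ℕ) : Prop := v ∈ N.verts ∧ inDeg N v = 2

def IsTreeVert (N : Network) (v : ℕ) : Prop := v ∈ N.verts ∧ inDeg N v = 1 ∧ outDeg N v = 2

def IsInternal (N : Network) (v : ℕ) : Prop := v ∈ N.verts ∧ v ≠ N.root ∧ ¬ IsLeaf N v

def IsTree (N : Network) : Prop := ∀ v : ℕ, ¬ IsRet N v

noncomputable def retCount (N : Network) : ℕ := {v : ℕ | IsRet N v}.ncard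

/-- Tree-child: every non-leaf vertex has a child that is a tree vertex or a leaf. -/
def IsTreeChild (N : Network) : Prop :=
  ∀ v ∈ N.verts, ¬ IsLeaf N v → ∃ w : ℕ, N.arc v w = true ∧ (IsTreeVert N w ∨ IsLeaf N w)

/-- An omnian: an internal vertex all of whose children are reticulations. -/
def IsOmnian (N : Network) (v : ℕ) : Prop :=
  IsInternal N v ∧ ∀ w : ℕ, N.arc v w = true → IsRet N w

noncomputable def omnianCount (N : Network) : ℕ := {v : ℕ | IsOmnian N v}.ncard

/-- `N'` is obtained from `N` by adding a leaf to the arc `uv`: the arc is subdivided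
by a fresh vertex `w`, and a fresh leaf `x` is attached to `w`. -/
def IsLeafAdditionOn (N N' : Network) (u v : ℕ) : Prop :=
  N.arc u v = true ∧ ∃ w x : ℕ, w ∉ N.verts ∧ x ∉ N.verts ∧ w ≠ x ∧
    N'.verts = insert w (insert x N.verts) ∧ N'.root = N.root ∧
    ∀ a b : ℕ, (N'.arc a b = true ↔
      ((N.arc a b = true ∧ ¬ (a = u ∧ b = v)) ∨ (a = u ∧ b = w) ∨
        (a = w ∧ b = v) ∨ (a = w ∧ b = x)))

def IsLeafAddition (N N' : Network) : Prop := ∃ u v : ℕ, IsLeafAdditionOn N N' u v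

/-- `N'` is obtained from `N` by adding a leaf to a reticulation arc. -/
def IsRetArcLeafAddition (N N' : Network) : Prop :=
  ∃ u v : ℕ, IsRet N v ∧ IsLeafAdditionOn N N' u v

/-- `P` holds after exactly `k` steps of relation `step` starting from `N`. -/
def ReachableBy (step : Network → Network → Prop) (N : Network) (k : ℕ)
    (P : Network → Prop) : Prop :=
  ∃ M : ℕ → Network, M 0 = N ∧ (∀ i : ℕ, i < k → step (M i) (M (i + 1))) ∧ P (M k)

/-- The minimum number of leaf additions needed to bring `N` into the class `P`. -/
noncomputable def leafAddDist (P : Network → Prop) (N : Network) : ℕ :=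
  sInf {k : ℕ | ReachableBy IsLeafAddition N k P}

noncomputable def LTC (N : Network) : ℕ := leafAddDist IsTreeChild N

/-- Reduction of a cherry (x,y): delete the leaf x and suppress its parent p
(whose own parent is q, gaining the arc q → y). -/
def ReducesCherry (N N' : Network) (x y : ℕ) : Prop :=
  ∃ p q : ℕ, IsLeaf N x ∧ IsLeaf N y ∧ x ≠ y ∧
    N.arc p x = true ∧ N.arc p y = true ∧ N.arc q p = true ∧
    N'.verts = (N.verts.erase x).erase p ∧ N'.root = N.root ∧
    ∀ a b : ℕ, (N'.arc a b = true ↔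
      (N.arc a b = true ∧ a ≠ p ∧ b ≠ p ∧ b ≠ x) ∨ (a = q ∧ b = y))

/-- Reduction of a reticulated cherry (x,y): delete the arc from the parent p_y of y
to the reticulation parent p_x of x, and clean up (suppressing p_x and p_y). -/
def ReducesRetCherry (N N' : Network) (x y : ℕ) : Prop :=
  ∃ px py z q : ℕ, IsLeaf N x ∧ IsLeaf N y ∧ IsRet N px ∧
    N.arc px x = true ∧ N.arc py px = true ∧ N.arc py y = true ∧
    N.arc z px = true ∧ z ≠ py ∧ N.arc q py = true ∧
    N'.verts = (N.verts.erase px).erase py ∧ N'.root = N.root ∧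
    ∀ a b : ℕ, (N'.arc a b = true ↔
      (N.arc a b = true ∧ a ≠ px ∧ a ≠ py ∧ b ≠ px ∧ b ≠ py) ∨
        (a = z ∧ b = x) ∨ (a = q ∧ b = y))

def CherryStep (N N' : Network) : Prop :=
  ∃ x y : ℕ, ReducesCherry N N' x y ∨ ReducesRetCherry N N' x y

/-- A network consisting of the root and a single leaf. -/
def IsSingleLeaf (N : Network) : Prop := ∃ x : ℕ, x ≠ N.root ∧ N.verts = {N.root, x}

/-- Orchard: reducible to a single leaf by cherry and reticulated cherry reductions. -/
def IsOrchard (N : Network) : Prop :=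
  ∃ N' : Network, Relation.ReflTransGen CherryStep N N' ∧ IsSingleLeaf N'

noncomputable def LOR (N : Network) : ℕ := leafAddDist IsOrchard N

/-- Tree-based: there is a spanning tree (a choice of one incoming arc for each
non-root vertex) all of whose leaves are leaves of `N`. -/
def IsTreeBased (N : Network) : Prop :=
  ∃ T : ℕ → ℕ → Bool, (∀ u v : ℕ, T u v = true → N.arc u v = true) ∧
    (∀ v ∈ N.verts, v ≠ N.root → (N.verts.filter fun u => T u v = true).card = 1) ∧
    (∀ v ∈ N.verts, ¬ IsLeaf N v → ∃ w : ℕ, T v w = true)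

noncomputable def LTB (N : Network) : ℕ := leafAddDist IsTreeBased N

/-- A zig-zag trail: a nonempty duplicate-free sequence of arcs in which
consecutive arcs share a tail or share a head. -/
def IsZigZag (N : Network) (s : List (ℕ × ℕ)) : Prop :=
  s ≠ [] ∧ s.Nodup ∧ (∀ a ∈ s, N.arc a.1 a.2 = true) ∧
    List.Chain' (fun a b : ℕ × ℕ => a.1 = b.1 ∨ a.2 = b.2) s

def IsMaximalZigZag (N : Network) (s : List (ℕ × ℕ)) : Prop :=
  IsZigZag N s ∧ ∀ t : List (ℕ × ℕ), IsZigZag N t → s.Sublist t → t.length = s.length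

/-- A W-fence: a maximal zig-zag trail of even length whose two end-arc tails
are both reticulations. -/
def IsWFence (N : Network) (s : List (ℕ × ℕ)) : Prop :=
  IsMaximalZigZag N s ∧ s.length % 2 = 0 ∧ 2 ≤ s.length ∧
    IsRet N (s.headD (0, 0)).1 ∧ IsRet N (s.getLastD (0, 0)).1

/-- An N-fence: a maximal zig-zag trail of odd length exactly one of whose
end-arc tails is a reticulation. -/
def IsNFence (N : Network) (s : List (ℕ × ℕ)) : Prop :=
  IsMaximalZigZag N s ∧ s.length % 2 = 1 ∧
    Xor' (IsRet N (s.headD (0, 0)).1) (IsRet N (s.getLastD (0, 0)).1)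

/-- A zig-zag decomposition: a set of maximal zig-zag trails partitioning the
non-root arcs of the network. -/
def IsZigZagDecomposition (N : Network) (D : Set (List (ℕ × ℕ))) : Prop :=
  (∀ s ∈ D, IsMaximalZigZag N s) ∧
  (∀ s ∈ D, ∀ p ∈ s, p.1 ≠ N.root) ∧
  (∀ a b : ℕ, N.arc a b = true → a ≠ N.root → ∃! s : List (ℕ × ℕ), s ∈ D ∧ (a, b) ∈ s)

/-- A cherry shape: two arcs with a common tail. -/
def IsCherryShape (N : Network) (s : Set (ℕ × ℕ)) : Prop :=
  ∃ p x y : ℕ, x ≠ y ∧ N.arc p x = true ∧ N.arc p y = true ∧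
    s = {(p, x), (p, y)}

/-- A reticulated cherry shape: arcs p_x x, p_y p_x, p_y y where p_x is a reticulation;
its middle arc is p_y p_x. -/
def IsRetCherryShape (N : Network) (s : Set (ℕ × ℕ)) : Prop :=
  ∃ x y px py : ℕ, IsRet N px ∧ N.arc px x = true ∧ N.arc py px = true ∧
    N.arc py y = true ∧ y ≠ px ∧ s = {(px, x), (py, px), (py, y)}

/-- `s` is a reticulated cherry shape with middle arc `(u, r)`. -/
def IsMiddleArcOf (N : Network) (s : Set (ℕ × ℕ)) (u r : ℕ) : Prop :=
  ∃ x y : ℕ, IsRet N r ∧ N.arc r x = true ∧ N.arc u r = true ∧ N.arc u y = true ∧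
    y ≠ r ∧ s = {(r, x), (u, r), (u, y)}

/-- A cherry cover: cherry shapes and reticulated cherry shapes covering every
non-root arc exactly once. -/
def IsCherryCover (N : Network) (P : Set (Set (ℕ × ℕ))) : Prop :=
  (∀ s ∈ P, IsCherryShape N s ∨ IsRetCherryShape N s) ∧
  (∀ a b : ℕ, N.arc a b = true → a ≠ N.root →
    ∃! s : Set (ℕ × ℕ), s ∈ P ∧ (a, b) ∈ s)

/-- The internal vertices of a shape are the tails of its arcs. -/
def shapeInternals (s : Set (ℕ × ℕ)) : Set ℕ := {p : ℕ | ∃ x : ℕ, (p, x) ∈ s}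

/-- The endpoints of a shape: heads of its arcs that are not tails of its arcs. -/
def shapeEndpoints (s : Set (ℕ × ℕ)) : Set ℕ :=
  {x : ℕ | (∃ p : ℕ, (p, x) ∈ s) ∧ ∀ y : ℕ, (x, y) ∉ s}

/-- In the auxiliary graph, shape `B` is directly above shape `C` if an internal
vertex of `C` is an endpoint of `B`. -/
def DirectlyAbove (B C : Set (ℕ × ℕ)) : Prop :=
  ∃ v : ℕ, v ∈ shapeEndpoints B ∧ v ∈ shapeInternals C

/-- The auxiliary graph of the cherry cover `P` contains a directed cycle. -/
def HasCyclicAux (P : Set (Set (ℕ × ℕ))) : Prop :=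
  ∃ s ∈ P, Relation.TransGen
    (fun B C : Set (ℕ × ℕ) => B ∈ P ∧ C ∈ P ∧ DirectlyAbove B C) s s

/-- A non-temporal labelling of `N`. -/
def IsNonTemporal (N : Network) (t : ℕ → ℝ) : Prop :=
  (∀ u v : ℕ, N.arc u v = true → t u ≤ t v) ∧
  (∀ u v : ℕ, N.arc u v = true → t u = t v → IsRet N v) ∧
  (∀ u : ℕ, IsInternal N u → ∃ v : ℕ, N.arc u v = true ∧ t u < t v) ∧
  (∀ r u v : ℕ, IsRet N r → N.arc u r = true → N.arc v r = true → u ≠ v →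
    ¬ (t u = t r ∧ t v = t r))

/-- An inret: a reticulation with no incoming horizontal arc
(i.e. both incoming arcs vertical). -/
def Inret (N : Network) (t : ℕ → ℝ) (r : ℕ) : Prop :=
  IsRet N r ∧ ∀ u : ℕ, N.arc u r = true → t u ≠ t r

noncomputable def inretCount (N : Network) (t : ℕ → ℝ) : ℕ := {r : ℕ | Inret N t r}.ncard

/-- HGT-consistent labelling: a non-temporal labelling in which every reticulation
has exactly one incoming horizontal arc. -/
def IsHGTConsistent (N : Network) (t : ℕ → ℝ) : Prop :=
  IsNonTemporal N t ∧ ∀ r : ℕ, IsRet N r → ∃! u : ℕ, N.arc u r = true ∧ t u = t r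

/-- V_OR: the minimum number of inrets over all non-temporal labellings. -/
noncomputable def VOR (N : Network) : ℕ :=
  sInf {k : ℕ | ∃ t : ℕ → ℝ, IsNonTemporal N t ∧ inretCount N t = k}

/-- The network `N` is the result of the vertex-cover reduction applied to `G`. -/
def IsVCReduction {α : Type} [Fintype α] [DecidableEq α] (G : SimpleGraph α)
    (N : Network) : Prop :=
  ∃ (R W L M : α → ℕ → ℕ) (P : α → ℕ) (S : ℕ → ℕ) (rho : ℕ)
    (e : ℕ → α) (pi tau : α → α → ℕ),
    (∀ v : α, ∃! i : ℕ, 1 ≤ i ∧ i ≤ Fintype.card α ∧ e i = v) ∧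
    (∀ v u : α, G.Adj v u → pi v u ∈ ({1, 2, 3} : Set ℕ)) ∧
    (∀ v u u' : α, G.Adj v u → G.Adj v u' → pi v u = pi v u' → u = u') ∧
    (∀ v u : α, G.Adj v u → tau v u ∈ ({5, 6, 7} : Set ℕ)) ∧
    (∀ v u u' : α, G.Adj v u → G.Adj v u' → tau v u = tau v u' → u = u') ∧
    Function.Injective
      (fun z : (α × Fin 8) ⊕ (α × Fin 7) ⊕ (α × Fin 5) ⊕ (α × Fin 4) ⊕ α ⊕
          (Fin (Fintype.card α - 1)) ⊕ Unit =>
        match z with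
        | Sum.inl (v, i) => R v i.1
        | Sum.inr (Sum.inl (v, i)) => W v (i.1 + 1)
        | Sum.inr (Sum.inr (Sum.inl (v, i))) => L v (i.1 + 1)
        | Sum.inr (Sum.inr (Sum.inr (Sum.inl (v, i)))) => M v (i.1 + 1)
        | Sum.inr (Sum.inr (Sum.inr (Sum.inr (Sum.inl v)))) => P v
        | Sum.inr (Sum.inr (Sum.inr (Sum.inr (Sum.inr (Sum.inl i))))) => S (i.1 + 1)
        | Sum.inr (Sum.inr (Sum.inr (Sum.inr (Sum.inr (Sum.inr _))))) => rho) ∧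
    N.root = rho ∧
    (∀ x : ℕ, x ∈ N.verts ↔
      (∃ v i, i ≤ 7 ∧ x = R v i) ∨ (∃ v i, 1 ≤ i ∧ i ≤ 7 ∧ x = W v i) ∨
      (∃ v i, 1 ≤ i ∧ i ≤ 5 ∧ x = L v i) ∨ (∃ v i, 1 ≤ i ∧ i ≤ 4 ∧ x = M v i) ∨
      (∃ v, x = P v) ∨ (∃ i, 1 ≤ i ∧ i ≤ Fintype.card α - 1 ∧ x = S i) ∨ x = rho) ∧
    (∀ a b : ℕ, N.arc a b = true ↔
      (a = rho ∧ b = S 1) ∨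
      (∃ i, 1 ≤ i ∧ i ≤ Fintype.card α - 2 ∧ a = S i ∧ b = S (i + 1)) ∨
      (∃ i, 1 ≤ i ∧ i ≤ Fintype.card α - 1 ∧ a = S i ∧ b = P (e i)) ∨
      (a = S (Fintype.card α - 1) ∧ b = P (e (Fintype.card α))) ∨
      (∃ v, a = P v ∧ (b = M v 4 ∨ b = W v 7)) ∨
      (∃ v, a = M v 4 ∧ (b = M v 3 ∨ b = R v 0)) ∨
      (∃ v, a = M v 3 ∧ (b = M v 2 ∨ b = W v 6)) ∨
      (∃ v, a = M v 2 ∧ (b = M v 1 ∨ b = W v 5)) ∨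
      (∃ v, a = M v 1 ∧ (b = R v 0 ∨ b = W v 4)) ∨
      (∃ v, a = R v 0 ∧ b = R v 1) ∨
      (∃ v i, 1 ≤ i ∧ i ≤ 6 ∧ a = W v i ∧ (b = R v i ∨ b = R v (i + 1))) ∨
      (∃ v, a = W v 7 ∧ (b = R v 7 ∨ b = L v 5)) ∨
      (∃ v i, 1 ≤ i ∧ i ≤ 4 ∧ a = R v i ∧ b = L v i) ∨
      (∃ u v, G.Adj u v ∧ a = R u (tau u v) ∧ b = W v (pi v u)))

/-!
`VOR N = 0` says that `N` has a non-temporal labelling in which every reticulation has an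
incoming horizontal arc, i.e. an HGT-consistent labelling; so the claim is that `N` is orchard
iff it has an HGT-consistent labelling.

Both cherry reductions delete two vertices `D` and replace each path `a → d → b` through
`D` by an arc `a → b`; this keeps the degrees of all other vertices. An HGT-consistent labelling
restricts to the reduced network, and one of the reduced network lifts back by placing `D`
above all remaining labels and every leaf above `D`. Conversely, given an HGT-consistent
labelling, a highest internal vertex `u` that is not a reticulation exists (descend along
horizontal arcs). Some child of `u` lies higher, so it is a leaf; the other child is a leaf or,
by maximality, a reticulation reached by a horizontal arc, whose own child is then a leaf. So
`u` is the top of a cherry or of a reticulated cherry; reducing it and inducting on the size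
ends at a single leaf.
-/

theorem Network.ext {N₁ N₂ : Network} (hV : N₁.verts = N₂.verts) (hA : N₁.arc = N₂.arc)
    (hR : N₁.root = N₂.root) : N₁ = N₂ := by
  cases N₁; cases N₂; cases hV; cases hA; cases hR; rfl

theorem _root_.Finset.eq_or_eq_of_card_eq_two {α : Type*} [DecidableEq α] {s : Finset α}
    (hs : s.card = 2) {a b c : α} (ha : a ∈ s) (hb : b ∈ s) (hab : a ≠ b) (hc : c ∈ s) :
    c = a ∨ c = b := by
  obtain ⟨x, y, -, hxy⟩ := Finset.card_eq_two.mp hs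
  simp only [hxy, Finset.mem_insert, Finset.mem_singleton] at ha hb hc
  grind

theorem _root_.Finset.erase_erase_eq_sdiff {α : Type*} [DecidableEq α] (s : Finset α) (a b : α) :
    (s.erase a).erase b = s \ {a, b} := by
  rw [Finset.sdiff_insert, Finset.sdiff_singleton_eq_erase, Finset.erase_right_comm]

/-- `s'` is obtained from `s` by replacing each element `d ∈ D` by its unique `R`-partner
outside `D`. -/
theorem _root_.Finset.card_eq_of_bypass {α : Type*} [Nonempty α] {s s' D : Finset α}
    {R : α → α → Prop} (hs' : ∀ b, b ∈ s' ↔ b ∉ D ∧ (b ∈ s ∨ ∃ d ∈ s, d ∈ D ∧ R d b))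
    (hR : ∀ d ∈ s, d ∈ D → ∃! b, b ∉ D ∧ R d b)
    (hkept : ∀ d ∈ s, d ∈ D → ∀ b ∈ s, R d b → b ∈ D)
    (hdel : ∀ d ∈ s, ∀ d' ∈ s, d ∈ D → d' ∈ D → ∀ b ∉ D, R d b → R d' b → d = d') :
    s'.card = s.card := by
  classical
  choose! κ hκ using fun d hd hdD => (hR d hd hdD).exists
  have himage : s' = s.image fun d => if d ∈ D then κ d else d := by
    ext b
    simp only [hs', Finset.mem_image]
    constructor
    · rintro ⟨hbD, hb | ⟨d, hd, hdD, hdb⟩⟩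
      · exact ⟨b, hb, if_neg hbD⟩
      · exact ⟨d, hd, by rw [if_pos hdD]; exact (hR d hd hdD).unique (hκ d hd hdD) ⟨hbD, hdb⟩⟩
    · rintro ⟨d, hd, rfl⟩
      split_ifs with hdD
      · exact ⟨(hκ d hd hdD).1, .inr ⟨d, hd, hdD, (hκ d hd hdD).2⟩⟩
      · exact ⟨hdD, .inl hd⟩
  rw [himage, Finset.card_image_of_injOn]
  intro d hd d' hd' h
  simp only at h
  split_ifs at h with hdD hd'D hd'D
  · exact hdel d hd d' hd' hdD hd'D _ (hκ d hd hdD).1 (hκ d hd hdD).2 (h ▸ (hκ d' hd' hd'D).2)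
  · exact absurd (hkept d hd hdD d' hd' (h ▸ (hκ d hd hdD).2)) hd'D
  · exact absurd (hkept d' hd' hd'D d hd (h ▸ (hκ d' hd' hd'D).2)) hdD
  · exact h

def parents (N : Network) (v : ℕ) : Finset ℕ := N.verts.filter fun u => N.arc u v = true

def children (N : Network) (u : ℕ) : Finset ℕ := N.verts.filter fun v => N.arc u v = true

section Basics

variable {N : Network} {a b u v w : ℕ}

theorem mem_of_arc_left (h : N.arc u v = true) : u ∈ N.verts := (N.arc_mem u v h).1

theorem mem_of_arc_right (h : N.arc u v = true) : v ∈ N.verts := (N.arc_mem u v h).2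

@[simp] theorem mem_parents : u ∈ parents N v ↔ N.arc u v = true := by
  simpa [parents] using fun h => mem_of_arc_left h

@[simp] theorem mem_children : v ∈ children N u ↔ N.arc u v = true := by
  simpa [children] using fun h => mem_of_arc_right h

theorem card_parents : (parents N v).card = inDeg N v := rfl

theorem card_children : (children N u).card = outDeg N u := rfl

theorem not_arc_of_arc (h : N.arc u v = true) : N.arc v u ≠ true := fun h' =>
  N.acyclic u (.tail (.single h) h')

theorem ne_of_arc (h : N.arc u v = true) : u ≠ v := by
  rintro rfl; exact N.acyclic u (.single h)

theorem ne_root_of_arc (h : N.arc u v = true) : v ≠ N.root := by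
  rintro rfl
  have : parents N N.root = ∅ := Finset.card_eq_zero.mp N.root_indeg
  simpa [this] using (mem_parents (N := N)).mpr h

theorem exists_arc_of_ne_root (hv : v ∈ N.verts) (hr : v ≠ N.root) : ∃ u, N.arc u v = true := by
  obtain ⟨u, hu⟩ : (parents N v).Nonempty := Finset.card_pos.mp <| by
    rcases N.nonroot_deg v hv hr with ⟨h, -⟩ | ⟨h, -⟩ | ⟨h, -⟩ <;> simp [card_parents, inDeg, h]
  exact ⟨u, mem_parents.mp hu⟩

theorem eq_of_arc_of_inDeg_eq_one (h : inDeg N v = 1) (hu : N.arc u v = true)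
    (hw : N.arc w v = true) : u = w :=
  Finset.card_le_one.mp h.le u (mem_parents.mpr hu) w (mem_parents.mpr hw)

theorem eq_of_arc_of_outDeg_eq_one (h : outDeg N u = 1) (hv : N.arc u v = true)
    (hw : N.arc u w = true) : v = w :=
  Finset.card_le_one.mp h.le v (mem_children.mpr hv) w (mem_children.mpr hw)

theorem eq_or_eq_of_inDeg_eq_two (h : inDeg N v = 2) (ha : N.arc a v = true)
    (hb : N.arc b v = true) (hab : a ≠ b) (hu : N.arc u v = true) : u = a ∨ u = b :=
  Finset.eq_or_eq_of_card_eq_two h (mem_parents.mpr ha) (mem_parents.mpr hb) hab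
    (mem_parents.mpr hu)

theorem eq_or_eq_of_outDeg_eq_two (h : outDeg N u = 2) (ha : N.arc u a = true)
    (hb : N.arc u b = true) (hab : a ≠ b) (hw : N.arc u w = true) : w = a ∨ w = b :=
  Finset.eq_or_eq_of_card_eq_two h (mem_children.mpr ha) (mem_children.mpr hb) hab
    (mem_children.mpr hw)

theorem exists_ne_arc_of_inDeg_eq_two (h : inDeg N v = 2) (u : ℕ) :
    ∃ w, N.arc w v = true ∧ w ≠ u := by
  obtain ⟨w, hw, hne⟩ := (Finset.one_lt_card_iff_nontrivial.mp
    (show 1 < (parents N v).card by rw [card_parents, h]; omega)).exists_ne u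
  exact ⟨w, mem_parents.mp hw, hne⟩

theorem exists_ne_arc_of_outDeg_eq_two (h : outDeg N u = 2) (v : ℕ) :
    ∃ w, N.arc u w = true ∧ w ≠ v := by
  obtain ⟨w, hw, hne⟩ := (Finset.one_lt_card_iff_nontrivial.mp
    (show 1 < (children N u).card by rw [card_children, h]; omega)).exists_ne v
  exact ⟨w, mem_children.mp hw, hne⟩

theorem IsLeaf.not_arc (h : IsLeaf N v) : N.arc v w ≠ true := fun hw => by
  have := h.2.2
  rw [← card_children, Finset.card_eq_zero] at this
  simpa [this] using (mem_children (N := N)).mpr hw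

theorem not_isLeaf_of_arc (h : N.arc v w = true) : ¬ IsLeaf N v := fun hl => hl.not_arc h

theorem IsLeaf.eq_of_arc (h : IsLeaf N v) (hu : N.arc u v = true) (hw : N.arc w v = true) :
    u = w :=
  eq_of_arc_of_inDeg_eq_one h.2.1 hu hw

theorem IsLeaf.not_isRet (h : IsLeaf N v) : ¬ IsRet N v := fun hr => by
  have := hr.2; have := h.2.1; omega

theorem IsRet.not_isLeaf (h : IsRet N v) : ¬ IsLeaf N v := fun hl => hl.not_isRet h

theorem IsRet.ne_root (h : IsRet N v) : v ≠ N.root := by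
  rintro rfl; have := h.2; have := N.root_indeg; simp_all [inDeg]

theorem IsRet.outDeg_eq_one (h : IsRet N v) : outDeg N v = 1 := by
  rcases N.nonroot_deg v h.1 h.ne_root with ⟨h1, -⟩ | ⟨-, h1⟩ | ⟨h1, -⟩ <;>
    simp_all [IsRet, inDeg, outDeg]

theorem IsRet.eq_of_arc (h : IsRet N v) (hw : N.arc v w = true) (hu : N.arc v u = true) :
    w = u :=
  eq_of_arc_of_outDeg_eq_one h.outDeg_eq_one hw hu

theorem inDeg_outDeg_of_arc_of_arc (hr : u ≠ N.root) (ha : N.arc u a = true)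
    (hb : N.arc u b = true) (hab : a ≠ b) : inDeg N u = 1 ∧ outDeg N u = 2 := by
  rcases N.nonroot_deg u (mem_of_arc_left ha) hr with h | ⟨-, h1⟩ | ⟨h1, h0⟩
  · exact h
  · exact absurd (eq_of_arc_of_outDeg_eq_one h1 ha hb) hab
  · exact absurd ha (IsLeaf.not_arc ⟨mem_of_arc_left ha, h1, h0⟩)

theorem IsInternal.exists_arc (h : IsInternal N v) : ∃ w, N.arc v w = true := by
  obtain ⟨w, hw⟩ : (children N v).Nonempty := Finset.card_pos.mp <| by
    rcases N.nonroot_deg v h.1 h.2.1 with ⟨-, h2⟩ | ⟨-, h2⟩ | ⟨h1, h0⟩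
    · simp [card_children, outDeg, h2]
    · simp [card_children, outDeg, h2]
    · exact absurd ⟨h.1, h1, h0⟩ h.2.2
  exact ⟨w, mem_children.mp hw⟩

theorem IsInternal.degrees_of_not_isRet (h : IsInternal N v) (hr : ¬ IsRet N v) :
    inDeg N v = 1 ∧ outDeg N v = 2 := by
  rcases N.nonroot_deg v h.1 h.2.1 with h' | ⟨h1, -⟩ | ⟨h1, h0⟩
  · exact h'
  · exact absurd ⟨h.1, h1⟩ hr
  · exact absurd ⟨h.1, h1, h0⟩ h.2.2

end Basics

section Labellings

variable {N : Network} {t : ℕ → ℝ} {u v r : ℕ}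

open Classical in
noncomputable def rank (N : Network) (v : ℕ) : ℕ :=
  (N.verts.filter fun u => Relation.TransGen (fun a b => N.arc a b = true) u v).card

theorem rank_lt_of_arc (h : N.arc u v = true) : rank N u < rank N v := by
  classical
  refine Finset.card_lt_card ⟨fun a ha => ?_, fun hsub => ?_⟩
  · simp only [Finset.mem_filter] at ha ⊢
    exact ⟨ha.1, ha.2.tail h⟩
  · have hu := hsub (Finset.mem_filter.mpr ⟨mem_of_arc_left h, .single h⟩)
    exact N.acyclic u (Finset.mem_filter.mp hu).2

theorem exists_isNonTemporal (N : Network) : ∃ t : ℕ → ℝ, IsNonTemporal N t := by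
  have hlt {u v : ℕ} (h : N.arc u v = true) : (rank N u : ℝ) < rank N v := by
    exact_mod_cast rank_lt_of_arc h
  refine ⟨fun v => rank N v, fun u v h => (hlt h).le, fun u v h he => absurd he (hlt h).ne,
    fun u hu => ?_, fun r u v _ hu _ _ he => (hlt hu).ne he.1⟩
  obtain ⟨w, hw⟩ := hu.exists_arc
  exact ⟨w, hw, hlt hw⟩

theorem IsNonTemporal.root_le (ht : IsNonTemporal N t) (hv : v ∈ N.verts) :
    t N.root ≤ t v := by
  induction hk : rank N v using Nat.strong_induction_on generalizing v with
  | _ k ih =>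
    by_cases hr : v = N.root
    · rw [hr]
    obtain ⟨u, hu⟩ := exists_arc_of_ne_root hv hr
    exact (ih _ (hk ▸ rank_lt_of_arc hu) (mem_of_arc_left hu) rfl).trans (ht.1 u v hu)

theorem IsNonTemporal.ne_root_of_horizontal (ht : IsNonTemporal N t) (hr : IsRet N r)
    (hu : N.arc u r = true) (he : t u = t r) : u ≠ N.root := by
  rintro rfl
  obtain ⟨z, hz, hzu⟩ := exists_ne_arc_of_inDeg_eq_two hr.2 N.root
  have : t z = t r := le_antisymm (ht.1 z r hz) (he ▸ ht.root_le (mem_of_arc_left hz))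
  exact ht.2.2.2 r _ z hr hu hz hzu.symm ⟨he, this⟩

theorem isHGTConsistent_iff : IsHGTConsistent N t ↔
    IsNonTemporal N t ∧ ∀ r, IsRet N r → ∃ u, N.arc u r = true ∧ t u = t r := by
  refine and_congr_right fun ht => forall₂_congr fun r hr =>
    ⟨ExistsUnique.exists, fun ⟨u, hu⟩ => ⟨u, hu, fun w hw => ?_⟩⟩
  by_contra hne
  exact ht.2.2.2 r w u hr hw.1 hu.1 hne ⟨hw.2, hu.2⟩

theorem inretCount_eq_zero_iff :
    inretCount N t = 0 ↔ ∀ r, IsRet N r → ∃ u, N.arc u r = true ∧ t u = t r := by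
  have hfin : {r | Inret N t r}.Finite := N.verts.finite_toSet.subset fun r hr => hr.1.1
  rw [inretCount, Set.ncard_eq_zero hfin, Set.eq_empty_iff_forall_notMem]
  simp only [Set.mem_ofPred_eq, Inret, not_and, not_forall, not_not, exists_prop]

theorem VOR_eq_zero_iff : VOR N = 0 ↔ ∃ t, IsHGTConsistent N t := by
  -- `sInf ∅ = 0`, so the set of inret counts has to be shown nonempty.
  obtain ⟨t₀, ht₀⟩ := exists_isNonTemporal N
  have hne : {k | ∃ t, IsNonTemporal N t ∧ inretCount N t = k} ≠ ∅ :=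
    Set.nonempty_iff_ne_empty.mp ⟨_, t₀, ht₀, rfl⟩
  rw [VOR, Nat.sInf_eq_zero, or_iff_left hne]
  simp only [Set.mem_ofPred_eq, isHGTConsistent_iff, inretCount_eq_zero_iff]

end Labellings

/-- Conditions under which the vertices in `D` can be deleted from `N`, every path `a → d → b`
through a deleted vertex `d` being replaced by an arc `a → b` (see `PrunedArc`); "kept" means
not in `D`. -/
structure IsPrunable (N : Network) (D : Finset ℕ) : Prop where
  subset : D ⊆ N.verts
  root_not_mem : N.root ∉ D
  isLeaf_of_arc : ∀ d ∈ D, ∀ b ∉ D, N.arc d b = true → IsLeaf N b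
  existsUnique_keptParent : ∀ d ∈ D, ∀ b ∉ D, N.arc d b = true → ∃! a, a ∉ D ∧ N.arc a d = true
  existsUnique_keptChild : ∀ d ∈ D, ∀ a ∉ D, N.arc a d = true → ∃! b, b ∉ D ∧ N.arc d b = true
  exists_keptChild : ∀ d ∈ D, ¬ IsLeaf N d → ∃ b ∉ D, N.arc d b = true
  isRet_of_arc : ∀ a ∈ D, ∀ d ∈ D, N.arc a d = true → ¬ IsLeaf N d → IsRet N d
  existsUnique_deletedParent : ∀ r ∈ D, IsRet N r → ∃! a, a ∈ D ∧ N.arc a r = true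

def PrunedArc (N : Network) (D : Finset ℕ) (a b : ℕ) : Prop :=
  a ∉ D ∧ b ∉ D ∧ (N.arc a b = true ∨ ∃ d ∈ D, N.arc a d = true ∧ N.arc d b = true)

namespace IsPrunable

variable {N : Network} {D : Finset ℕ} {a b u v : ℕ}

theorem arc_of_prunedArc (hD : IsPrunable N D) (h : PrunedArc N D a b) (hb : ¬ IsLeaf N b) :
    N.arc a b = true := by
  obtain ⟨-, hbD, h | ⟨d, hdD, -, hdb⟩⟩ := h
  · exact h
  · exact absurd (hD.isLeaf_of_arc d hdD b hbD hdb) hb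

theorem mem_verts_of_prunedArc (h : PrunedArc N D a b) : a ∈ N.verts ∧ b ∈ N.verts := by
  obtain ⟨-, -, h | ⟨d, -, had, hdb⟩⟩ := h
  · exact N.arc_mem a b h
  · exact ⟨mem_of_arc_left had, mem_of_arc_right hdb⟩

theorem transGen_of_prunedArc (h : PrunedArc N D a b) :
    Relation.TransGen (fun a b => N.arc a b = true) a b := by
  obtain ⟨-, -, h | ⟨d, -, had, hdb⟩⟩ := h
  · exact .single h
  · exact .tail (.single had) hdb

open Classical in
theorem card_prunedParents (hD : IsPrunable N D) (hv : v ∉ D) :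
    ((N.verts \ D).filter fun a => PrunedArc N D a v).card = inDeg N v := by
  have hmem : ∀ a, a ∈ (N.verts \ D).filter (fun a => PrunedArc N D a v) ↔
      a ∉ D ∧ (a ∈ parents N v ∨ ∃ d ∈ parents N v, d ∈ D ∧ N.arc a d = true) := fun a => by
    rw [Finset.mem_filter, Finset.mem_sdiff]
    simp only [mem_parents, PrunedArc]
    constructor
    · rintro ⟨-, haD, -, h⟩
      exact ⟨haD, h.imp_right fun ⟨d, hdD, had, hdv⟩ => ⟨d, hdv, hdD, had⟩⟩
    · rintro ⟨haD, h | ⟨d, hdv, hdD, had⟩⟩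
      · exact ⟨⟨mem_of_arc_left h, haD⟩, haD, hv, .inl h⟩
      · exact ⟨⟨mem_of_arc_left had, haD⟩, haD, hv, .inr ⟨d, hdD, had, hdv⟩⟩
  refine Finset.card_eq_of_bypass hmem
    (fun d hd hdD => hD.existsUnique_keptParent d hdD v hv (mem_parents.mp hd))
    (fun d hd hdD a ha _ => ?_) (fun d hd d' hd' hdD _ _ _ _ _ => ?_)
  · have hleaf := hD.isLeaf_of_arc d hdD v hv (mem_parents.mp hd)
    exact hleaf.eq_of_arc (mem_parents.mp hd) (mem_parents.mp ha) ▸ hdD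
  · exact (hD.isLeaf_of_arc d hdD v hv (mem_parents.mp hd)).eq_of_arc (mem_parents.mp hd)
      (mem_parents.mp hd')

open Classical in
theorem card_prunedChildren (hD : IsPrunable N D) (hu : u ∉ D) :
    ((N.verts \ D).filter fun b => PrunedArc N D u b).card = outDeg N u := by
  have hmem : ∀ b, b ∈ (N.verts \ D).filter (fun b => PrunedArc N D u b) ↔
      b ∉ D ∧ (b ∈ children N u ∨ ∃ d ∈ children N u, d ∈ D ∧ N.arc d b = true) := fun b => by
    rw [Finset.mem_filter, Finset.mem_sdiff]
    simp only [mem_children, PrunedArc]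
    constructor
    · rintro ⟨-, -, hbD, h⟩
      exact ⟨hbD, h.imp_right fun ⟨d, hdD, hud, hdb⟩ => ⟨d, hud, hdD, hdb⟩⟩
    · rintro ⟨hbD, h | ⟨d, hud, hdD, hdb⟩⟩
      · exact ⟨⟨mem_of_arc_right h, hbD⟩, hu, hbD, .inl h⟩
      · exact ⟨⟨mem_of_arc_right hdb, hbD⟩, hu, hbD, .inr ⟨d, hdD, hud, hdb⟩⟩
  refine Finset.card_eq_of_bypass hmem
    (fun d hd hdD => hD.existsUnique_keptChild d hdD u hu (mem_children.mp hd))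
    (fun d hd hdD b hb hdb => ?_) (fun d hd d' hd' hdD _ b hbD hdb hd'b => ?_)
  · by_contra hbD
    have := (hD.isLeaf_of_arc d hdD b hbD hdb).eq_of_arc hdb (mem_children.mp hb)
    exact hu (this ▸ hdD)
  · exact (hD.isLeaf_of_arc d hdD b hbD hdb).eq_of_arc hdb hd'b

end IsPrunable

open Classical in
noncomputable def Network.prune (N : Network) (D : Finset ℕ) (hD : IsPrunable N D) :
    Network where
  verts := N.verts \ D
  arc a b := decide (PrunedArc N D a b)
  root := N.root
  root_mem := Finset.mem_sdiff.mpr ⟨N.root_mem, hD.root_not_mem⟩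
  arc_mem a b h := by
    have h := of_decide_eq_true h
    exact ⟨Finset.mem_sdiff.mpr ⟨(IsPrunable.mem_verts_of_prunedArc h).1, h.1⟩,
      Finset.mem_sdiff.mpr ⟨(IsPrunable.mem_verts_of_prunedArc h).2, h.2.1⟩⟩
  acyclic v h := N.acyclic v (h.lift' id fun a b h =>
    IsPrunable.transGen_of_prunedArc (of_decide_eq_true h))
  root_indeg := by
    simp only [decide_eq_true_eq]
    rw [hD.card_prunedParents hD.root_not_mem]
    exact N.root_indeg
  root_outdeg := by
    simp only [decide_eq_true_eq]
    rw [hD.card_prunedChildren hD.root_not_mem]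
    exact N.root_outdeg
  nonroot_deg v hv hr := by
    simp only [decide_eq_true_eq]
    rw [hD.card_prunedParents (Finset.mem_sdiff.mp hv).2,
      hD.card_prunedChildren (Finset.mem_sdiff.mp hv).2]
    exact N.nonroot_deg v (Finset.mem_sdiff.mp hv).1 hr

section Prune

variable {N : Network} {D : Finset ℕ} {hD : IsPrunable N D} {t : ℕ → ℝ} {a b v : ℕ}

@[simp] theorem prune_verts : (N.prune D hD).verts = N.verts \ D := rfl

@[simp] theorem prune_root : (N.prune D hD).root = N.root := rfl

@[simp] theorem prune_arc : (N.prune D hD).arc a b = true ↔ PrunedArc N D a b := by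
  simp [Network.prune]

theorem notMem_of_mem_prune (h : v ∈ (N.prune D hD).verts) : v ∉ D :=
  (Finset.mem_sdiff.mp h).2

theorem inDeg_prune (hv : v ∉ D) : inDeg (N.prune D hD) v = inDeg N v := by
  classical
  simp only [inDeg, prune_verts, prune_arc]
  exact hD.card_prunedParents hv

theorem outDeg_prune (hv : v ∉ D) : outDeg (N.prune D hD) v = outDeg N v := by
  classical
  simp only [outDeg, prune_verts, prune_arc]
  exact hD.card_prunedChildren hv

theorem isRet_prune_iff (hv : v ∉ D) : IsRet (N.prune D hD) v ↔ IsRet N v := by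
  simp [IsRet, inDeg_prune hv, hv]

theorem isLeaf_prune_iff (hv : v ∉ D) : IsLeaf (N.prune D hD) v ↔ IsLeaf N v := by
  simp [IsLeaf, inDeg_prune hv, outDeg_prune hv, hv]

theorem isInternal_prune_iff (hv : v ∉ D) : IsInternal (N.prune D hD) v ↔ IsInternal N v := by
  simp [IsInternal, isLeaf_prune_iff hv, hv]

theorem card_prune_lt (hne : D.Nonempty) : (N.prune D hD).verts.card < N.verts.card :=
  Finset.card_lt_card (Finset.sdiff_ssubset hD.subset hne)

theorem IsNonTemporal.prune (ht : IsNonTemporal N t) : IsNonTemporal (N.prune D hD) t := by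
  obtain ⟨hmono, hhor, hint, huniq⟩ := ht
  refine ⟨fun u v h => ?_, fun u v h he => ?_, fun u hu => ?_, fun r u v hr hu hv huv => ?_⟩
  · obtain ⟨-, -, h | ⟨d, -, hud, hdv⟩⟩ := prune_arc.mp h
    · exact hmono u v h
    · exact (hmono u d hud).trans (hmono d v hdv)
  · obtain ⟨-, hvD, h | ⟨d, hdD, hud, hdv⟩⟩ := prune_arc.mp h
    · exact (isRet_prune_iff hvD).mpr (hhor u v h he)
    · have : t d = t v := le_antisymm (hmono d v hdv) (he ▸ hmono u d hud)
      exact absurd (hhor d v hdv this) (hD.isLeaf_of_arc d hdD v hvD hdv).not_isRet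
  · have huD := notMem_of_mem_prune hu.1
    obtain ⟨c, hc, hlt⟩ := hint u ((isInternal_prune_iff huD).mp hu)
    by_cases hcD : c ∈ D
    · obtain ⟨b, ⟨hbD, hcb⟩, -⟩ := hD.existsUnique_keptChild c hcD u huD hc
      exact ⟨b, prune_arc.mpr ⟨huD, hbD, .inr ⟨c, hcD, hc, hcb⟩⟩, hlt.trans_le (hmono c b hcb)⟩
    · exact ⟨c, prune_arc.mpr ⟨huD, hcD, .inl hc⟩, hlt⟩
  · have hrN := (isRet_prune_iff (notMem_of_mem_prune hr.1)).mp hr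
    exact huniq r u v hrN (hD.arc_of_prunedArc (prune_arc.mp hu) hrN.not_isLeaf)
      (hD.arc_of_prunedArc (prune_arc.mp hv) hrN.not_isLeaf) huv

theorem IsHGTConsistent.prune (ht : IsHGTConsistent N t) : IsHGTConsistent (N.prune D hD) t := by
  rw [isHGTConsistent_iff] at ht ⊢
  refine ⟨ht.1.prune, fun r hr => ?_⟩
  have hrD := notMem_of_mem_prune hr.1
  have hrN := (isRet_prune_iff hrD).mp hr
  obtain ⟨u, hu, he⟩ := ht.2 r hrN
  have huD : u ∉ D := fun huD => (hD.isLeaf_of_arc u huD r hrD hu).not_isRet hrN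
  exact ⟨u, prune_arc.mpr ⟨huD, hrD, .inl hu⟩, he⟩

end Prune

open Classical in
noncomputable def extendLabel (N : Network) (D : Finset ℕ) (t' : ℕ → ℝ) (B : ℝ) (v : ℕ) : ℝ :=
  if IsLeaf N v then B + 2 else if v ∈ D then B + 1 else t' v

section ExtendLabel

variable {N : Network} {D : Finset ℕ} {hD : IsPrunable N D} {t' : ℕ → ℝ} {B : ℝ} {u v : ℕ}

theorem extendLabel_of_isLeaf (h : IsLeaf N v) : extendLabel N D t' B v = B + 2 := by
  simp [extendLabel, h]

theorem extendLabel_of_mem (hl : ¬ IsLeaf N v) (hv : v ∈ D) : extendLabel N D t' B v = B + 1 := by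
  simp [extendLabel, hl, hv]

theorem extendLabel_of_notMem (hl : ¬ IsLeaf N v) (hv : v ∉ D) :
    extendLabel N D t' B v = t' v := by
  simp [extendLabel, hl, hv]

theorem mem_of_le_extendLabel (hB : ∀ v ∈ N.verts, t' v ≤ B) (hv : v ∈ N.verts)
    (hl : ¬ IsLeaf N v) (h : B + 1 ≤ extendLabel N D t' B v) : v ∈ D := by
  by_contra hvD
  rw [extendLabel_of_notMem hl hvD] at h
  linarith [hB v hv]

theorem extendLabel_le (hB : ∀ v ∈ N.verts, t' v ≤ B) (hv : v ∈ N.verts) (hl : ¬ IsLeaf N v) :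
    extendLabel N D t' B v ≤ B + 1 := by
  by_cases hvD : v ∈ D
  · rw [extendLabel_of_mem hl hvD]
  · rw [extendLabel_of_notMem hl hvD]; linarith [hB v hv]

theorem extendLabel_le_of_arc (ht' : IsNonTemporal (N.prune D hD) t')
    (hB : ∀ v ∈ N.verts, t' v ≤ B) (h : N.arc u v = true) :
    extendLabel N D t' B u ≤ extendLabel N D t' B v := by
  have hu := extendLabel_le (D := D) hB (mem_of_arc_left h) (not_isLeaf_of_arc h)
  by_cases hvl : IsLeaf N v
  · rw [extendLabel_of_isLeaf hvl]; linarith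
  by_cases hvD : v ∈ D
  · rwa [extendLabel_of_mem hvl hvD]
  have huD : u ∉ D := fun huD => hvl (hD.isLeaf_of_arc u huD v hvD h)
  rw [extendLabel_of_notMem (not_isLeaf_of_arc h) huD, extendLabel_of_notMem hvl hvD]
  exact ht'.1 u v (prune_arc.mpr ⟨huD, hvD, .inl h⟩)

theorem isRet_of_extendLabel_eq (ht' : IsNonTemporal (N.prune D hD) t')
    (hB : ∀ v ∈ N.verts, t' v ≤ B) (h : N.arc u v = true)
    (he : extendLabel N D t' B u = extendLabel N D t' B v) : IsRet N v := by
  have hu := extendLabel_le (D := D) hB (mem_of_arc_left h) (not_isLeaf_of_arc h)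
  by_cases hvl : IsLeaf N v
  · rw [extendLabel_of_isLeaf hvl] at he; linarith
  by_cases hvD : v ∈ D
  · rw [extendLabel_of_mem hvl hvD] at he
    exact hD.isRet_of_arc u
      (mem_of_le_extendLabel hB (mem_of_arc_left h) (not_isLeaf_of_arc h) he.ge) v hvD h hvl
  have huD : u ∉ D := fun huD => hvl (hD.isLeaf_of_arc u huD v hvD h)
  rw [extendLabel_of_notMem (not_isLeaf_of_arc h) huD, extendLabel_of_notMem hvl hvD] at he
  exact (isRet_prune_iff hvD).mp (ht'.2.1 u v (prune_arc.mpr ⟨huD, hvD, .inl h⟩) he)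

theorem exists_extendLabel_lt (ht' : IsNonTemporal (N.prune D hD) t')
    (hB : ∀ v ∈ N.verts, t' v ≤ B) (hu : IsInternal N u) :
    ∃ v, N.arc u v = true ∧ extendLabel N D t' B u < extendLabel N D t' B v := by
  by_cases huD : u ∈ D
  · obtain ⟨b, hbD, hub⟩ := hD.exists_keptChild u huD hu.2.2
    refine ⟨b, hub, ?_⟩
    rw [extendLabel_of_mem hu.2.2 huD, extendLabel_of_isLeaf (hD.isLeaf_of_arc u huD b hbD hub)]
    linarith
  obtain ⟨c, hc, hlt⟩ := ht'.2.2.1 u ((isInternal_prune_iff huD).mpr hu)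
  have htu : t' u ≤ B := hB u hu.1
  rw [extendLabel_of_notMem hu.2.2 huD]
  obtain ⟨-, hcD, hc | ⟨d, hdD, hud, hdc⟩⟩ := prune_arc.mp hc
  · refine ⟨c, hc, ?_⟩
    by_cases hcl : IsLeaf N c
    · rw [extendLabel_of_isLeaf hcl]; linarith
    · rwa [extendLabel_of_notMem hcl hcD]
  · refine ⟨d, hud, ?_⟩
    rw [extendLabel_of_mem (not_isLeaf_of_arc hdc) hdD]; linarith

theorem isNonTemporal_extendLabel (ht' : IsNonTemporal (N.prune D hD) t')
    (hB : ∀ v ∈ N.verts, t' v ≤ B) : IsNonTemporal N (extendLabel N D t' B) := by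
  refine ⟨fun u v h => extendLabel_le_of_arc ht' hB h,
    fun u v h he => isRet_of_extendLabel_eq ht' hB h he,
    fun u hu => exists_extendLabel_lt ht' hB hu, fun r u v hr hu hv huv he => ?_⟩
  have hmem {w : ℕ} (hw : N.arc w r = true) (hwr : extendLabel N D t' B w = B + 1) : w ∈ D :=
    mem_of_le_extendLabel hB (mem_of_arc_left hw) (not_isLeaf_of_arc hw) hwr.ge
  by_cases hrD : r ∈ D
  · rw [extendLabel_of_mem hr.not_isLeaf hrD] at he
    exact huv ((hD.existsUnique_deletedParent r hrD hr).unique ⟨hmem hu he.1, hu⟩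
      ⟨hmem hv he.2, hv⟩)
  have hkept {w : ℕ} (hw : N.arc w r = true) : w ∉ D := fun hwD =>
    hr.not_isLeaf (hD.isLeaf_of_arc w hwD r hrD hw)
  rw [extendLabel_of_notMem (not_isLeaf_of_arc hu) (hkept hu),
    extendLabel_of_notMem (not_isLeaf_of_arc hv) (hkept hv),
    extendLabel_of_notMem hr.not_isLeaf hrD] at he
  exact ht'.2.2.2 r u v ((isRet_prune_iff hrD).mpr hr) (prune_arc.mpr ⟨hkept hu, hrD, .inl hu⟩)
    (prune_arc.mpr ⟨hkept hv, hrD, .inl hv⟩) huv he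

theorem isHGTConsistent_extendLabel (ht' : IsHGTConsistent (N.prune D hD) t')
    (hB : ∀ v ∈ N.verts, t' v ≤ B) : IsHGTConsistent N (extendLabel N D t' B) := by
  rw [isHGTConsistent_iff] at ht' ⊢
  refine ⟨isNonTemporal_extendLabel ht'.1 hB, fun r hr => ?_⟩
  by_cases hrD : r ∈ D
  · obtain ⟨u, ⟨huD, hu⟩, -⟩ := hD.existsUnique_deletedParent r hrD hr
    refine ⟨u, hu, ?_⟩
    rw [extendLabel_of_mem (not_isLeaf_of_arc hu) huD, extendLabel_of_mem hr.not_isLeaf hrD]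
  obtain ⟨u, hu, he⟩ := ht'.2 r ((isRet_prune_iff hrD).mpr hr)
  have huD := (prune_arc.mp hu).1
  have hu := hD.arc_of_prunedArc (prune_arc.mp hu) hr.not_isLeaf
  refine ⟨u, hu, ?_⟩
  rwa [extendLabel_of_notMem (not_isLeaf_of_arc hu) huD, extendLabel_of_notMem hr.not_isLeaf hrD]

end ExtendLabel

theorem IsPrunable.exists_isHGTConsistent {N : Network} {D : Finset ℕ} (hD : IsPrunable N D)
    (h : ∃ t', IsHGTConsistent (N.prune D hD) t') : ∃ t, IsHGTConsistent N t := by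
  obtain ⟨t', ht'⟩ := h
  obtain ⟨B, hB⟩ := (N.verts.image t').bddAbove
  exact ⟨extendLabel N D t' B, isHGTConsistent_extendLabel ht' fun v hv =>
    hB (Finset.mem_coe.mpr (Finset.mem_image_of_mem t' hv))⟩

theorem Network.eq_prune {N N' : Network} {D : Finset ℕ} (hD : IsPrunable N D)
    (hV : N'.verts = N.verts \ D) (hR : N'.root = N.root)
    (hA : ∀ a b, N'.arc a b = true ↔ PrunedArc N D a b) : N' = N.prune D hD :=
  Network.ext hV (funext₂ fun a b => Bool.eq_iff_iff.mpr ((hA a b).trans prune_arc.symm)) hR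

structure IsCherry (N : Network) (x y p q : ℕ) : Prop where
  isLeaf_x : IsLeaf N x
  isLeaf_y : IsLeaf N y
  ne_x_y : x ≠ y
  arc_p_x : N.arc p x = true
  arc_p_y : N.arc p y = true
  arc_q_p : N.arc q p = true

namespace IsCherry

variable {N : Network} {x y p q a b u w : ℕ}

theorem degrees_p (h : IsCherry N x y p q) : inDeg N p = 1 ∧ outDeg N p = 2 :=
  inDeg_outDeg_of_arc_of_arc (ne_root_of_arc h.arc_q_p) h.arc_p_x h.arc_p_y h.ne_x_y

theorem eq_of_arc_p (h : IsCherry N x y p q) (hu : N.arc u p = true) : u = q :=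
  eq_of_arc_of_inDeg_eq_one h.degrees_p.1 hu h.arc_q_p

theorem eq_or_eq_of_arc (h : IsCherry N x y p q) (hw : N.arc p w = true) : w = x ∨ w = y :=
  eq_or_eq_of_outDeg_eq_two h.degrees_p.2 h.arc_p_x h.arc_p_y h.ne_x_y hw

theorem isPrunable (h : IsCherry N x y p q) : IsPrunable N {x, p} := by
  have hpy : p ≠ y := ne_of_arc h.arc_p_y
  have hqx : q ≠ x := fun e => h.isLeaf_x.not_arc (e ▸ h.arc_q_p)
  have hp : inDeg N p = 1 := h.degrees_p.1
  refine ⟨?_, ?_, fun d hd b hb hdb => ?_, fun d hd b hb hdb => ?_, fun d hd a ha had => ?_,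
    fun d hd hdl => ?_, fun a ha d hd had hdl => ?_, fun r hr hret => ?_⟩ <;>
    try simp only [Finset.mem_insert, Finset.mem_singleton, not_or] at *
  · simp [Finset.insert_subset_iff, mem_of_arc_right h.arc_p_x, mem_of_arc_left h.arc_p_x]
  · exact ⟨(ne_root_of_arc h.arc_p_x).symm, (ne_root_of_arc h.arc_q_p).symm⟩
  · rcases hd with rfl | rfl
    · exact (h.isLeaf_x.not_arc hdb).elim
    · exact (h.eq_or_eq_of_arc hdb).resolve_left hb.1 ▸ h.isLeaf_y
  · rcases hd with rfl | rfl
    · exact (h.isLeaf_x.not_arc hdb).elim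
    · exact ⟨q, ⟨⟨hqx, ne_of_arc h.arc_q_p⟩, h.arc_q_p⟩, fun a ha => h.eq_of_arc_p ha.2⟩
  · rcases hd with rfl | rfl
    · exact (ha.2 (h.isLeaf_x.eq_of_arc had h.arc_p_x)).elim
    · refine ⟨y, ⟨⟨h.ne_x_y.symm, hpy.symm⟩, h.arc_p_y⟩, fun w hw => ?_⟩
      exact (h.eq_or_eq_of_arc hw.2).resolve_left hw.1.1
  · rcases hd with rfl | rfl
    · exact (hdl h.isLeaf_x).elim
    · exact ⟨y, ⟨h.ne_x_y.symm, hpy.symm⟩, h.arc_p_y⟩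
  · rcases hd with rfl | rfl
    · exact (hdl h.isLeaf_x).elim
    · rcases ha with rfl | rfl
      · exact (h.isLeaf_x.not_arc had).elim
      · exact (ne_of_arc had rfl).elim
  · rcases hr with rfl | rfl
    · exact (h.isLeaf_x.not_isRet hret).elim
    · have := hret.2; omega

theorem prunedArc_iff (h : IsCherry N x y p q) : PrunedArc N {x, p} a b ↔
    (N.arc a b = true ∧ a ≠ p ∧ b ≠ p ∧ b ≠ x) ∨ (a = q ∧ b = y) := by
  simp only [PrunedArc, Finset.mem_insert, Finset.mem_singleton, not_or, exists_eq_or_imp,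
    exists_eq_left]
  constructor
  · rintro ⟨⟨-, hap⟩, ⟨hbx, hbp⟩, hab | ⟨-, hxb⟩ | ⟨hap', hpb⟩⟩
    · exact .inl ⟨hab, hap, hbp, hbx⟩
    · exact (h.isLeaf_x.not_arc hxb).elim
    · exact .inr ⟨h.eq_of_arc_p hap', (h.eq_or_eq_of_arc hpb).resolve_left hbx⟩
  · rintro (⟨hab, hap, hbp, hbx⟩ | ⟨rfl, rfl⟩)
    · exact ⟨⟨fun e => h.isLeaf_x.not_arc (e ▸ hab), hap⟩, ⟨hbx, hbp⟩, .inl hab⟩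
    · exact ⟨⟨fun e => h.isLeaf_x.not_arc (e ▸ h.arc_q_p), ne_of_arc h.arc_q_p⟩,
        ⟨h.ne_x_y.symm, (ne_of_arc h.arc_p_y).symm⟩, .inr (.inr ⟨h.arc_q_p, h.arc_p_y⟩)⟩

theorem reducesCherry (h : IsCherry N x y p q) :
    ReducesCherry N (N.prune {x, p} h.isPrunable) x y :=
  ⟨p, q, h.isLeaf_x, h.isLeaf_y, h.ne_x_y, h.arc_p_x, h.arc_p_y, h.arc_q_p,
    (Finset.erase_erase_eq_sdiff _ _ _).symm, rfl, fun _ _ => prune_arc.trans h.prunedArc_iff⟩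

end IsCherry

theorem ReducesCherry.exists_eq_prune {N N' : Network} {x y : ℕ} (h : ReducesCherry N N' x y) :
    ∃ D, ∃ hD : IsPrunable N D, N' = N.prune D hD := by
  obtain ⟨p, q, hx, hy, hxy, hpx, hpy, hqp, hV, hR, hA⟩ := h
  have hc : IsCherry N x y p q := ⟨hx, hy, hxy, hpx, hpy, hqp⟩
  exact ⟨_, hc.isPrunable, Network.eq_prune _ (hV.trans (Finset.erase_erase_eq_sdiff _ _ _)) hR
    fun a b => (hA a b).trans hc.prunedArc_iff.symm⟩

structure IsRetCherry (N : Network) (x y px py z q : ℕ) : Prop where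
  isLeaf_x : IsLeaf N x
  isLeaf_y : IsLeaf N y
  isRet_px : IsRet N px
  arc_px_x : N.arc px x = true
  arc_py_px : N.arc py px = true
  arc_py_y : N.arc py y = true
  arc_z_px : N.arc z px = true
  ne_z_py : z ≠ py
  arc_q_py : N.arc q py = true

namespace IsRetCherry

variable {N : Network} {x y px py z q a b u w : ℕ}

theorem ne_y_px (h : IsRetCherry N x y px py z q) : y ≠ px :=
  fun e => h.isRet_px.not_isLeaf (e ▸ h.isLeaf_y)

theorem degrees_py (h : IsRetCherry N x y px py z q) : inDeg N py = 1 ∧ outDeg N py = 2 :=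
  inDeg_outDeg_of_arc_of_arc (ne_root_of_arc h.arc_q_py) h.arc_py_px h.arc_py_y h.ne_y_px.symm

theorem eq_or_eq_of_arc_px (h : IsRetCherry N x y px py z q) (hu : N.arc u px = true) :
    u = py ∨ u = z :=
  eq_or_eq_of_inDeg_eq_two h.isRet_px.2 h.arc_py_px h.arc_z_px h.ne_z_py.symm hu

theorem eq_or_eq_of_arc_py (h : IsRetCherry N x y px py z q) (hw : N.arc py w = true) :
    w = px ∨ w = y :=
  eq_or_eq_of_outDeg_eq_two h.degrees_py.2 h.arc_py_px h.arc_py_y h.ne_y_px.symm hw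

theorem eq_of_arc_py (h : IsRetCherry N x y px py z q) (hu : N.arc u py = true) : u = q :=
  eq_of_arc_of_inDeg_eq_one h.degrees_py.1 hu h.arc_q_py

theorem isPrunable (h : IsRetCherry N x y px py z q) : IsPrunable N {px, py} := by
  have hxpx : x ≠ px := (ne_of_arc h.arc_px_x).symm
  have hxpy : x ≠ py := fun e => h.isLeaf_x.not_arc (e ▸ h.arc_py_px)
  have hypy : y ≠ py := (ne_of_arc h.arc_py_y).symm
  have hqpx : q ≠ px := fun e => not_arc_of_arc h.arc_py_px (e ▸ h.arc_q_py)
  refine ⟨?_, ?_, fun d hd b hb hdb => ?_, fun d hd b hb hdb => ?_, fun d hd a ha had => ?_,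
    fun d hd hdl => ?_, fun a ha d hd had hdl => ?_, fun r hr hret => ?_⟩ <;>
    try simp only [Finset.mem_insert, Finset.mem_singleton, not_or] at *
  · simp [Finset.insert_subset_iff, mem_of_arc_right h.arc_py_px, mem_of_arc_left h.arc_py_px]
  · exact ⟨(ne_root_of_arc h.arc_py_px).symm, (ne_root_of_arc h.arc_q_py).symm⟩
  · rcases hd with rfl | rfl
    · exact h.isRet_px.eq_of_arc hdb h.arc_px_x ▸ h.isLeaf_x
    · exact (h.eq_or_eq_of_arc_py hdb).resolve_left hb.1 ▸ h.isLeaf_y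
  · rcases hd with rfl | rfl
    · refine ⟨z, ⟨⟨ne_of_arc h.arc_z_px, h.ne_z_py⟩, h.arc_z_px⟩, fun a ha => ?_⟩
      exact (h.eq_or_eq_of_arc_px ha.2).resolve_left ha.1.2
    · exact ⟨q, ⟨⟨hqpx, ne_of_arc h.arc_q_py⟩, h.arc_q_py⟩, fun a ha => h.eq_of_arc_py ha.2⟩
  · rcases hd with rfl | rfl
    · exact ⟨x, ⟨⟨hxpx, hxpy⟩, h.arc_px_x⟩, fun w hw => h.isRet_px.eq_of_arc hw.2 h.arc_px_x⟩
    · refine ⟨y, ⟨⟨h.ne_y_px, hypy⟩, h.arc_py_y⟩, fun w hw => ?_⟩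
      exact (h.eq_or_eq_of_arc_py hw.2).resolve_left hw.1.1
  · rcases hd with rfl | rfl
    · exact ⟨x, ⟨hxpx, hxpy⟩, h.arc_px_x⟩
    · exact ⟨y, ⟨h.ne_y_px, hypy⟩, h.arc_py_y⟩
  · rcases hd with rfl | rfl
    · exact h.isRet_px
    · rcases ha with rfl | rfl
      · exact (hxpy (h.isRet_px.eq_of_arc had h.arc_px_x).symm).elim
      · exact (ne_of_arc had rfl).elim
  · rcases hr with rfl | rfl
    · refine ⟨py, ⟨.inr rfl, h.arc_py_px⟩, fun a ha => ?_⟩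
      refine (h.eq_or_eq_of_arc_px ha.2).resolve_right fun e => ?_
      rcases ha.1 with e' | e'
      · exact ne_of_arc h.arc_z_px (e ▸ e')
      · exact h.ne_z_py (e ▸ e')
    · have := hret.2; have := h.degrees_py.1; omega

theorem prunedArc_iff (h : IsRetCherry N x y px py z q) : PrunedArc N {px, py} a b ↔
    (N.arc a b = true ∧ a ≠ px ∧ a ≠ py ∧ b ≠ px ∧ b ≠ py) ∨ (a = z ∧ b = x) ∨
      (a = q ∧ b = y) := by
  simp only [PrunedArc, Finset.mem_insert, Finset.mem_singleton, not_or, exists_eq_or_imp,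
    exists_eq_left]
  constructor
  · rintro ⟨⟨hapx, hapy⟩, ⟨hbpx, hbpy⟩, hab | ⟨hapx', hpxb⟩ | ⟨hapy', hpyb⟩⟩
    · exact .inl ⟨hab, hapx, hapy, hbpx, hbpy⟩
    · exact .inr (.inl ⟨(h.eq_or_eq_of_arc_px hapx').resolve_left hapy,
        h.isRet_px.eq_of_arc hpxb h.arc_px_x⟩)
    · exact .inr (.inr ⟨h.eq_of_arc_py hapy', (h.eq_or_eq_of_arc_py hpyb).resolve_left hbpx⟩)
  · rintro (⟨hab, hapx, hapy, hbpx, hbpy⟩ | ⟨rfl, rfl⟩ | ⟨rfl, rfl⟩)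
    · exact ⟨⟨hapx, hapy⟩, ⟨hbpx, hbpy⟩, .inl hab⟩
    · exact ⟨⟨ne_of_arc h.arc_z_px, h.ne_z_py⟩,
        ⟨(ne_of_arc h.arc_px_x).symm, fun e => h.isLeaf_x.not_arc (e ▸ h.arc_py_px)⟩,
        .inr (.inl ⟨h.arc_z_px, h.arc_px_x⟩)⟩
    · exact ⟨⟨fun e => not_arc_of_arc h.arc_py_px (e ▸ h.arc_q_py), ne_of_arc h.arc_q_py⟩,
        ⟨h.ne_y_px, (ne_of_arc h.arc_py_y).symm⟩, .inr (.inr ⟨h.arc_q_py, h.arc_py_y⟩)⟩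

theorem reducesRetCherry (h : IsRetCherry N x y px py z q) :
    ReducesRetCherry N (N.prune {px, py} h.isPrunable) x y :=
  ⟨px, py, z, q, h.isLeaf_x, h.isLeaf_y, h.isRet_px, h.arc_px_x, h.arc_py_px, h.arc_py_y,
    h.arc_z_px, h.ne_z_py, h.arc_q_py, (Finset.erase_erase_eq_sdiff _ _ _).symm, rfl,
    fun _ _ => prune_arc.trans h.prunedArc_iff⟩

end IsRetCherry

theorem ReducesRetCherry.exists_eq_prune {N N' : Network} {x y : ℕ}
    (h : ReducesRetCherry N N' x y) : ∃ D, ∃ hD : IsPrunable N D, N' = N.prune D hD := by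
  obtain ⟨px, py, z, q, hx, hy, hpx, hpxx, hpypx, hpyy, hzpx, hzpy, hqpy, hV, hR, hA⟩ := h
  have hc : IsRetCherry N x y px py z q := ⟨hx, hy, hpx, hpxx, hpypx, hpyy, hzpx, hzpy, hqpy⟩
  exact ⟨_, hc.isPrunable, Network.eq_prune _ (hV.trans (Finset.erase_erase_eq_sdiff _ _ _)) hR
    fun a b => (hA a b).trans hc.prunedArc_iff.symm⟩

section Orchard

variable {N N' : Network} {t : ℕ → ℝ} {r u : ℕ}

theorem CherryStep.exists_eq_prune (h : CherryStep N N') :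
    ∃ D, ∃ hD : IsPrunable N D, N' = N.prune D hD := by
  obtain ⟨x, y, h | h⟩ := h
  exacts [h.exists_eq_prune, h.exists_eq_prune]

theorem exists_cherry_of_max (ht : IsNonTemporal N t) (hu : IsInternal N u)
    (hur : ¬ IsRet N u) (hmax : ∀ v, IsInternal N v → t v ≤ t u) :
    (∃ x y p q, IsCherry N x y p q) ∨ ∃ x y px py z q, IsRetCherry N x y px py z q := by
  have hleaf {v w : ℕ} (hw : N.arc v w = true) (hlt : t u < t w) : IsLeaf N w := by
    by_contra hl
    exact (hmax w ⟨mem_of_arc_right hw, ne_root_of_arc hw, hl⟩).not_gt hlt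
  obtain ⟨c, hc, hlt⟩ := ht.2.2.1 u hu
  obtain ⟨c', hc', hne⟩ := exists_ne_arc_of_outDeg_eq_two (hu.degrees_of_not_isRet hur).2 c
  obtain ⟨q, hq⟩ := exists_arc_of_ne_root hu.1 hu.2.1
  by_cases hc'l : IsLeaf N c'
  · exact .inl ⟨c', c, u, q, hc'l, hleaf hc hlt, hne, hc', hc, hq⟩
  have hint : IsInternal N c' := ⟨mem_of_arc_right hc', ne_root_of_arc hc', hc'l⟩
  -- `c'` is internal, so not higher than `u`: the arc `u → c'` is horizontal.
  have he : t u = t c' := le_antisymm (ht.1 u c' hc') (hmax c' hint)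
  have hret := ht.2.1 u c' hc' he
  obtain ⟨d, hd, hdlt⟩ := ht.2.2.1 c' hint
  obtain ⟨z, hz, hzu⟩ := exists_ne_arc_of_inDeg_eq_two hret.2 u
  exact .inr ⟨d, c, c', u, z, q, hleaf hd (he ▸ hdlt), hleaf hc hlt, hret, hd, hc', hc, hz, hzu,
    hq⟩

theorem IsHGTConsistent.exists_max_not_isRet (ht : IsHGTConsistent N t)
    (hint : ∃ v, IsInternal N v) :
    ∃ u, IsInternal N u ∧ ¬ IsRet N u ∧ ∀ v, IsInternal N v → t v ≤ t u := by
  classical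
  rw [isHGTConsistent_iff] at ht
  obtain ⟨v₀, hv₀⟩ := hint
  set I := N.verts.filter (IsInternal N)
  obtain ⟨m, hm, hmax⟩ := I.exists_max_image t ⟨v₀, Finset.mem_filter.mpr ⟨hv₀.1, hv₀⟩⟩
  -- Among the highest internal vertices, one of least rank has no horizontal parent.
  obtain ⟨u, hu, hmin⟩ := (I.filter fun v => t v = t m).exists_min_image (rank N)
    ⟨m, Finset.mem_filter.mpr ⟨hm, rfl⟩⟩
  simp only [I, Finset.mem_filter] at hu hmin hmax
  refine ⟨u, hu.1.2, fun hr => ?_, fun v hv => hu.2 ▸ hmax v ⟨hv.1, hv⟩⟩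
  obtain ⟨w, hw, he⟩ := ht.2 u hr
  have hwI : IsInternal N w :=
    ⟨mem_of_arc_left hw, ht.1.ne_root_of_horizontal hr hw he, not_isLeaf_of_arc hw⟩
  exact (rank_lt_of_arc hw).not_ge (hmin w ⟨⟨hwI.1, hwI⟩, he.trans hu.2⟩)

theorem IsHGTConsistent.exists_cherryStep (ht : IsHGTConsistent N t)
    (hint : ∃ v, IsInternal N v) :
    ∃ D, ∃ hD : IsPrunable N D, D.Nonempty ∧ CherryStep N (N.prune D hD) := by
  obtain ⟨u, hu, hur, hmax⟩ := ht.exists_max_not_isRet hint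
  rcases exists_cherry_of_max ht.1 hu hur hmax with ⟨x, y, p, q, h⟩ | ⟨x, y, px, py, z, q, h⟩
  · exact ⟨_, h.isPrunable, Finset.insert_nonempty _ _, x, y, .inl h.reducesCherry⟩
  · exact ⟨_, h.isPrunable, Finset.insert_nonempty _ _, x, y, .inr h.reducesRetCherry⟩

theorem isSingleLeaf_of_forall_not_isInternal (h : ∀ v, ¬ IsInternal N v) : IsSingleLeaf N := by
  obtain ⟨c, hc⟩ := Finset.card_eq_one.mp (show (children N N.root).card = 1 from N.root_outdeg)
  have hrc : N.arc N.root c = true := mem_children.mp (hc ▸ Finset.mem_singleton_self c)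
  refine ⟨c, ne_root_of_arc hrc, Finset.Subset.antisymm (fun v hv => ?_) ?_⟩
  · by_cases hvr : v = N.root
    · simp [hvr]
    obtain ⟨u, hu⟩ := exists_arc_of_ne_root hv hvr
    have hur : u = N.root := by
      by_contra hur
      exact h u ⟨mem_of_arc_left hu, hur, not_isLeaf_of_arc hu⟩
    have : v ∈ children N N.root := mem_children.mpr (hur ▸ hu)
    simp [hc] at this
    simp [this]
  · simp [Finset.insert_subset_iff, N.root_mem, mem_of_arc_right hrc]

theorem IsSingleLeaf.not_isRet (h : IsSingleLeaf N) : ¬ IsRet N r := fun hr => by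
  obtain ⟨x, -, hV⟩ := h
  have hroot {u : ℕ} (hu : N.arc u r = true) : u = N.root := by
    have hu' := mem_of_arc_left hu
    have hr' := hr.1
    rw [hV, Finset.mem_insert, Finset.mem_singleton] at hu' hr'
    have := ne_of_arc hu
    have := hr.ne_root
    omega
  obtain ⟨a, ha⟩ := exists_arc_of_ne_root hr.1 hr.ne_root
  obtain ⟨b, hb, hba⟩ := exists_ne_arc_of_inDeg_eq_two hr.2 a
  exact hba ((hroot hb).trans (hroot ha).symm)

theorem IsOrchard.exists_isHGTConsistent (h : IsOrchard N) : ∃ t, IsHGTConsistent N t := by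
  obtain ⟨N', hsteps, hleaf⟩ := h
  induction hsteps using Relation.ReflTransGen.head_induction_on with
  | refl =>
    obtain ⟨t, ht⟩ := exists_isNonTemporal N'
    exact ⟨t, isHGTConsistent_iff.mpr ⟨ht, fun r hr => (hleaf.not_isRet hr).elim⟩⟩
  | head hstep _ ih =>
    obtain ⟨D, hD, rfl⟩ := hstep.exists_eq_prune
    exact hD.exists_isHGTConsistent ih

theorem isOrchard_of_isHGTConsistent (ht : IsHGTConsistent N t) : IsOrchard N := by
  induction hk : N.verts.card using Nat.strong_induction_on generalizing N t with
  | _ k ih =>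
    by_cases hint : ∃ v, IsInternal N v
    · obtain ⟨D, hD, hne, hstep⟩ := ht.exists_cherryStep hint
      obtain ⟨N', hsteps, hleaf⟩ := ih _ (hk ▸ card_prune_lt (hD := hD) hne) ht.prune rfl
      exact ⟨N', .head hstep hsteps, hleaf⟩
    · exact ⟨N, .refl, isSingleLeaf_of_forall_not_isInternal (not_exists.mp hint)⟩

theorem isOrchard_iff_exists_isHGTConsistent : IsOrchard N ↔ ∃ t, IsHGTConsistent N t :=
  ⟨IsOrchard.exists_isHGTConsistent, fun ⟨_, ht⟩ => isOrchard_of_isHGTConsistent ht⟩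

end Orchard

/-- A network is orchard if and only if `V_OR(N) = 0`. -/
theorem orchard_iff_VOR_eq_zero (N : Network) : IsOrchard N ↔ VOR N = 0 := by
  rw [VOR_eq_zero_iff]
  exact isOrchard_iff_exists_isHGTConsistent

end PhyloNet
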